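/- arXiv:2012.02192 — 2 statements merged into one kernel-verified Lean document; each statement's English description precedes it below -/
import Mathlib

section
/- In the category of graphs, every pushout square along a monomorphism is also a pullback square. -/
open CategoryTheory CategoryTheory.Limits

/-- A directed graph: sets of nodes and edges with source and target functions. -/
structure DirGraph : Type 1 where
  N : Type
  E : Type
  s : E → N
  t : E → N

/-- A graph morphism: node and edge maps commuting with source and target. -/
@[ext]
structure GraphHom (G G' : DirGraph) : Type where
  fN : G.N → G'.N
  fE : G.E → G'.E
  comm_s : ∀ e, fN (G.s e) = G'.s (fE e)
  comm_t : ∀ e, fN (G.t e) = G'.t (fE e)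

instance : Category DirGraph where
  Hom := GraphHom
  id G := ⟨id, id, fun _ => rfl, fun _ => rfl⟩
  comp f g := ⟨g.fN ∘ f.fN, g.fE ∘ f.fE,
    fun e => by simp only [Function.comp_apply, f.comm_s, g.comm_s],
    fun e => by simp only [Function.comp_apply, f.comm_t, g.comm_t]⟩
  id_comp _ := rfl
  comp_id _ := rfl
  assoc _ _ _ := rfl

/-!
A graph is the same thing as a diagram `E ⇉ N` in `Type`, so `DirGraph` is equivalent to the
functor category `WalkingParallelPair ⥤ Type`. That category is adhesive because `Type` is and
pullbacks and pushouts of functors are computed pointwise; adhesivity transfers along the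
equivalence, and in an adhesive category a pushout along a monomorphism is a pullback.
-/

namespace DirGraph

open WalkingParallelPairHom

def toParallelPairFunctor : DirGraph ⥤ (WalkingParallelPair ⥤ Type) where
  obj G := parallelPair (TypeCat.ofHom G.s) (TypeCat.ofHom G.t)
  map φ := parallelPairHom _ _ _ _ (TypeCat.ofHom φ.fE) (TypeCat.ofHom φ.fN)
    (by ext e; exact φ.comm_s e) (by ext e; exact φ.comm_t e)
  map_id G := by ext x; cases x <;> rfl
  map_comp φ ψ := by ext x; cases x <;> rfl

def ofParallelPairFunctor : (WalkingParallelPair ⥤ Type) ⥤ DirGraph where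
  obj K := ⟨K.obj .one, K.obj .zero, K.map left, K.map right⟩
  map η := ⟨η.app .one, η.app .zero,
    NatTrans.naturality_apply η left, NatTrans.naturality_apply η right⟩

noncomputable def equivParallelPairFunctor : DirGraph ≌ (WalkingParallelPair ⥤ Type) :=
  CategoryTheory.Equivalence.mk toParallelPairFunctor ofParallelPairFunctor
    (NatIso.ofComponents Iso.refl)
    (NatIso.ofComponents (fun K => (diagramIsoParallelPair K).symm) fun η => by
      ext x a
      cases x <;> simp [toParallelPairFunctor, ofParallelPairFunctor, diagramIsoParallelPair])

instance : HasPullbacks DirGraph :=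
  Adjunction.hasLimitsOfShape_of_equivalence equivParallelPairFunctor.functor

instance : HasPushouts DirGraph :=
  Adjunction.hasColimitsOfShape_of_equivalence equivParallelPairFunctor.functor

instance : Adhesive DirGraph :=
  adhesive_of_preserves_and_reflects_isomorphism equivParallelPairFunctor.functor

end DirGraph

/-- In the category of graphs, every pushout square along a monomorphism is also a pullback. -/
theorem graph_pushout_isPullback {A B C D : DirGraph}
    (f : A ⟶ B) (g : A ⟶ C) (h : B ⟶ D) (k : C ⟶ D)
    (sq : IsPushout f g h k) (hf : Mono f) : IsPullback f g h k :=
  Adhesive.isPullback_of_isPushout_of_mono_left sq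
end

section
/- The invariant closure is a section of retyping: for every graph G typed over TG, retyping the invariant closure inv(G) (typed over the enriched type graph TG') back along the inclusion in_TG : TG → TG' by pullback yields a graph isomorphic to G, i.e., in_TG^<(inv(G)) ≅ G. -/
open CategoryTheory CategoryTheory.Limits

/-- The diagram whose colimit is the invariant closure of `G`: the graph `G` together with,
for each applicable shape, the body complement glued along the occurrence of its border. -/
def invIndex (ι : Type) (G : DirGraph) (border cbody : ι → DirGraph)
    (cshape : ∀ i, border i ⟶ cbody i) (occ : ∀ i, border i ⟶ G) :
    MultispanIndex
      { L := ι, R := Option ι, fst := fun i => some i, snd := fun _ => none } DirGraph where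
  left := border
  right := fun r => Option.rec G cbody r
  fst := cshape
  snd := occ

/-!
Pulling back along the mono `in_TG` keeps exactly the items typed in the image of `TG`, so it
suffices that `G → inv(G)` is injective and hits every such item. Every item of `inv(G)` comes
from `G` or from a body complement, and an item of a body complement typed in `TG` lies, by the
pullback square defining the complement, in its border, which is glued to `G`. Injectivity holds
because the border inclusions are monos, being pullbacks of `in_TG`: extending the occurrences
along them into `G` enlarged by a codiscrete part gives a cocone whose leg on `G` is the
inclusion.
-/

namespace GraphHom

variable {A B : DirGraph} {f g : A ⟶ B}

lemma congr_fN (h : f = g) (x : A.N) : f.fN x = g.fN x := by rw [h]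

lemma congr_fE (h : f = g) (e : A.E) : f.fE e = g.fE e := by rw [h]

end GraphHom

namespace DirGraph

variable {A B G H : DirGraph}

@[ext] lemma hom_ext {f g : A ⟶ B} (hN : f.fN = g.fN) (hE : f.fE = g.fE) :
    f = g :=
  GraphHom.ext hN hE

def pt : DirGraph := ⟨Unit, Empty, Empty.elim, Empty.elim⟩

def arrow : DirGraph := ⟨Bool, Unit, fun _ => false, fun _ => true⟩

def nodeHom (n : G.N) : pt ⟶ G := ⟨fun _ => n, Empty.elim, Empty.rec, Empty.rec⟩

def edgeHom (e : G.E) : arrow ⟶ G :=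
  ⟨fun b => cond b (G.t e) (G.s e), fun _ => e, fun _ => rfl, fun _ => rfl⟩

lemma nodeHom_comp (n : G.N) (f : G ⟶ H) : nodeHom n ≫ f = nodeHom (f.fN n) := by
  ext x
  · rfl
  · exact x.elim

lemma edgeHom_comp (e : G.E) (f : G ⟶ H) : edgeHom e ≫ f = edgeHom (f.fE e) := by
  ext b
  · cases b
    · exact f.comm_s e
    · exact f.comm_t e
  · rfl

lemma injective_fN_of_mono (f : G ⟶ H) [Mono f] : Function.Injective f.fN := fun a b h => by
  have := cancel_mono f |>.mp (by rw [nodeHom_comp, nodeHom_comp, h] :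
    nodeHom a ≫ f = nodeHom b ≫ f)
  exact GraphHom.congr_fN this ()

lemma injective_fE_of_mono (f : G ⟶ H) [Mono f] : Function.Injective f.fE := fun a b h => by
  have := cancel_mono f |>.mp (by rw [edgeHom_comp, edgeHom_comp, h] :
    edgeHom a ≫ f = edgeHom b ≫ f)
  exact GraphHom.congr_fE this ()

lemma mono_of_injective (f : G ⟶ H) (hN : Function.Injective f.fN)
    (hE : Function.Injective f.fE) : Mono f :=
  ⟨fun _ _ w => hom_ext (funext fun x => hN (GraphHom.congr_fN w x))
    (funext fun e => hE (GraphHom.congr_fE w e))⟩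

end DirGraph

namespace CategoryTheory.IsPullback

variable {A B X Y : DirGraph} {f : A ⟶ B} {g : A ⟶ X} {h : B ⟶ Y} {k : X ⟶ Y}

lemma exists_fN_eq (H : IsPullback f g h k) {b : B.N} {x : X.N} (hbx : h.fN b = k.fN x) :
    ∃ a, f.fN a = b ∧ g.fN a = x := by
  have w : DirGraph.nodeHom b ≫ h = DirGraph.nodeHom x ≫ k := by
    rw [DirGraph.nodeHom_comp, DirGraph.nodeHom_comp, hbx]
  exact ⟨(H.lift _ _ w).fN (), GraphHom.congr_fN (H.lift_fst _ _ w) (),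
    GraphHom.congr_fN (H.lift_snd _ _ w) ()⟩

lemma exists_fE_eq (H : IsPullback f g h k) {b : B.E} {x : X.E} (hbx : h.fE b = k.fE x) :
    ∃ a, f.fE a = b ∧ g.fE a = x := by
  have w : DirGraph.edgeHom b ≫ h = DirGraph.edgeHom x ≫ k := by
    rw [DirGraph.edgeHom_comp, DirGraph.edgeHom_comp, hbx]
  exact ⟨(H.lift _ _ w).fE (), GraphHom.congr_fE (H.lift_fst _ _ w) (),
    GraphHom.congr_fE (H.lift_snd _ _ w) ()⟩

end CategoryTheory.IsPullback

namespace DirGraph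

variable {A B X Y G : DirGraph}

lemma isPullback_of_preimage_range_subset {f : A ⟶ B} {g : A ⟶ X} {h : B ⟶ Y} {k : X ⟶ Y}
    [Mono f] [Mono k] (w : f ≫ h = g ≫ k)
    (hN : h.fN ⁻¹' Set.range k.fN ⊆ Set.range f.fN)
    (hE : h.fE ⁻¹' Set.range k.fE ⊆ Set.range f.fE) : IsPullback f g h k := by
  have hfN := injective_fN_of_mono f
  have hfE := injective_fE_of_mono f
  have liftN (s : PullbackCone h k) (x : s.pt.N) : ∃ a, f.fN a = s.fst.fN x :=
    hN ⟨s.snd.fN x, (GraphHom.congr_fN s.condition x).symm⟩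
  have liftE (s : PullbackCone h k) (e : s.pt.E) : ∃ a, f.fE a = s.fst.fE e :=
    hE ⟨s.snd.fE e, (GraphHom.congr_fE s.condition e).symm⟩
  let lift (s : PullbackCone h k) : s.pt ⟶ A :=
    { fN := fun x => (liftN s x).choose
      fE := fun e => (liftE s e).choose
      comm_s := fun e => hfN <| by
        rw [(liftN s _).choose_spec, f.comm_s, (liftE s e).choose_spec, s.fst.comm_s]
      comm_t := fun e => hfN <| by
        rw [(liftN s _).choose_spec, f.comm_t, (liftE s e).choose_spec, s.fst.comm_t] }
  have lift_fst (s : PullbackCone h k) : lift s ≫ f = s.fst :=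
    hom_ext (funext fun x => (liftN s x).choose_spec) (funext fun e => (liftE s e).choose_spec)
  refine IsPullback.of_isLimit (PullbackCone.IsLimit.mk w lift lift_fst (fun s => ?_) ?_)
  · rw [← cancel_mono k, Category.assoc, ← w, ← Category.assoc, lift_fst, s.condition]
  · intro s m hm _
    rw [← cancel_mono f, hm, lift_fst]

/-- The graph of pairs `(SN, SE)` of predicates on nodes and edges: a morphism `G ⟶ propGraph`
is the same as a pair of predicates on `G`, with no closure condition. -/
def propGraph : DirGraph := ⟨Prop, Prop × Prop × Prop, fun p => p.2.1, fun p => p.2.2⟩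

def indicator (SN : G.N → Prop) (SE : G.E → Prop) : G ⟶ propGraph :=
  ⟨SN, fun e => (SE e, SN (G.s e), SN (G.t e)), fun _ => rfl, fun _ => rfl⟩

lemma jointly_surjective_of_isColimit {J : Type*} [Category J] {F : J ⥤ DirGraph} {c : Cocone F}
    (hc : IsColimit c) :
    (∀ x : c.pt.N, ∃ j y, (c.ι.app j).fN y = x) ∧
      ∀ e : c.pt.E, ∃ j y, (c.ι.app j).fE y = e := by
  let SN (x : c.pt.N) : Prop := ∃ j y, (c.ι.app j).fN y = x
  let SE (e : c.pt.E) : Prop := ∃ j y, (c.ι.app j).fE y = e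
  have key : indicator SN SE = indicator (fun _ => True) (fun _ => True) := by
    refine hc.hom_ext fun j => hom_ext (funext fun y => ?_) (funext fun y => ?_)
    · exact eq_true ⟨j, y, rfl⟩
    · exact Prod.ext (eq_true ⟨j, y, rfl⟩) <| Prod.ext
        (eq_true ⟨j, _, (c.ι.app j).comm_s y⟩) (eq_true ⟨j, _, (c.ι.app j).comm_t y⟩)
  exact ⟨fun x => of_eq_true (GraphHom.congr_fN key x),
    fun e => of_eq_true (congrArg Prod.fst (GraphHom.congr_fE key e))⟩

/-- Morphisms into `G` extend along monos into `G.withCodiscrete` (`comp_extendAlong`). -/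
def withCodiscrete (G : DirGraph) : DirGraph :=
  ⟨Option G.N, G.E ⊕ Option G.N × Option G.N,
    Sum.elim (some ∘ G.s) Prod.fst, Sum.elim (some ∘ G.t) Prod.snd⟩

def toWithCodiscrete (G : DirGraph) : G ⟶ G.withCodiscrete :=
  ⟨some, Sum.inl, fun _ => rfl, fun _ => rfl⟩

noncomputable def extendAlongN (m : A ⟶ B) (f : A ⟶ G) : B.N → G.withCodiscrete.N :=
  Function.extend m.fN (some ∘ f.fN) fun _ => none

lemma extendAlongN_apply (m : A ⟶ B) [Mono m] (f : A ⟶ G) (a : A.N) :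
    extendAlongN m f (m.fN a) = some (f.fN a) :=
  (injective_fN_of_mono m).extend_apply _ _ a

noncomputable def extendAlongE (m : A ⟶ B) (f : A ⟶ G) : B.E → G.withCodiscrete.E :=
  Function.extend m.fE (Sum.inl ∘ f.fE) fun e =>
    Sum.inr (extendAlongN m f (B.s e), extendAlongN m f (B.t e))

lemma extendAlongE_apply (m : A ⟶ B) [Mono m] (f : A ⟶ G) (a : A.E) :
    extendAlongE m f (m.fE a) = Sum.inl (f.fE a) :=
  (injective_fE_of_mono m).extend_apply _ _ a

lemma extendAlongE_apply_of_notMem_range (m : A ⟶ B) (f : A ⟶ G) {e : B.E}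
    (he : e ∉ Set.range m.fE) :
    extendAlongE m f e = Sum.inr (extendAlongN m f (B.s e), extendAlongN m f (B.t e)) :=
  Function.extend_apply' _ _ _ he

noncomputable def extendAlong (m : A ⟶ B) [Mono m] (f : A ⟶ G) : B ⟶ G.withCodiscrete where
  fN := extendAlongN m f
  fE := extendAlongE m f
  comm_s e := by
    by_cases he : e ∈ Set.range m.fE
    · obtain ⟨a, rfl⟩ := he
      rw [extendAlongE_apply, ← m.comm_s, extendAlongN_apply, f.comm_s]
      rfl
    · rw [extendAlongE_apply_of_notMem_range m f he]
      rfl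
  comm_t e := by
    by_cases he : e ∈ Set.range m.fE
    · obtain ⟨a, rfl⟩ := he
      rw [extendAlongE_apply, ← m.comm_t, extendAlongN_apply, f.comm_t]
      rfl
    · rw [extendAlongE_apply_of_notMem_range m f he]
      rfl

lemma comp_extendAlong (m : A ⟶ B) [Mono m] (f : A ⟶ G) :
    m ≫ extendAlong m f = f ≫ G.toWithCodiscrete :=
  hom_ext (funext (extendAlongN_apply m f)) (funext (extendAlongE_apply m f))

lemma jointly_surjective_π_of_isColimit {J : MultispanShape}
    {I : MultispanIndex J DirGraph} {K : Multicofork I} (hK : IsColimit K) :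
    (∀ x : K.pt.N, ∃ r y, (K.π r).fN y = x) ∧
      ∀ e : K.pt.E, ∃ r y, (K.π r).fE y = e := by
  have factor : ∀ j, ∃ r, ∃ g : I.multispan.obj j ⟶ I.right r, K.ι.app j = g ≫ K.π r
    | .left a => ⟨_, _, K.fst_app_right a⟩
    | .right r => ⟨r, 𝟙 _, (Category.id_comp _).symm⟩
  obtain ⟨hN, hE⟩ := jointly_surjective_of_isColimit hK
  refine ⟨fun x => ?_, fun e => ?_⟩
  · obtain ⟨j, y, rfl⟩ := hN x
    obtain ⟨r, g, hg⟩ := factor j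
    exact ⟨r, g.fN y, by rw [hg]; rfl⟩
  · obtain ⟨j, y, rfl⟩ := hE e
    obtain ⟨r, g, hg⟩ := factor j
    exact ⟨r, g.fE y, by rw [hg]; rfl⟩

end DirGraph

section InvariantClosure

open DirGraph

variable {ι : Type} {G : DirGraph} {border cbody : ι → DirGraph}
  {cshape : ∀ i, border i ⟶ cbody i} {occ : ∀ i, border i ⟶ G}
  {K : Multicofork (invIndex ι G border cbody cshape occ)}

lemma invIndex_mono_π_none [∀ i, Mono (cshape i)] (hK : IsColimit K) : Mono (K.π none) := by
  let E : Multicofork (invIndex ι G border cbody cshape occ) :=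
    Multicofork.ofπ _ G.withCodiscrete
      (fun r => Option.rec G.toWithCodiscrete
        (fun i => (extendAlong (cshape i) (occ i) : cbody i ⟶ _)) r)
      (fun i => comp_extendAlong (cshape i) (occ i))
  have w : K.π none ≫ hK.desc E = G.toWithCodiscrete := hK.fac E (.right none)
  have : Mono (K.π none ≫ hK.desc E) := by
    rw [w]
    exact mono_of_injective _ (Option.some_injective _) Sum.inl_injective
  exact mono_of_mono _ (hK.desc E)

variable {TG TG' : DirGraph} {inTG : TG ⟶ TG'} {tB : ∀ i, border i ⟶ TG}
  {tCB : ∀ i, cbody i ⟶ TG'} {u : K.pt ⟶ TG'}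

lemma invIndex_preimage_range_fN_subset
    (hcompl : ∀ i, IsPullback (cshape i) (tB i) (tCB i) inTG) (hK : IsColimit K)
    (hu_some : ∀ i, K.π (some i) ≫ u = tCB i) :
    u.fN ⁻¹' Set.range inTG.fN ⊆ Set.range (K.π none).fN := by
  rintro w ⟨x, hx⟩
  obtain ⟨r, y, rfl⟩ := (jointly_surjective_π_of_isColimit hK).1 w
  cases r with
  | none => exact ⟨y, rfl⟩
  | some i =>
    have hy : (tCB i).fN y = inTG.fN x := by rw [← hu_some i]; exact hx.symm
    obtain ⟨b, rfl, -⟩ := (hcompl i).exists_fN_eq hy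
    exact ⟨(occ i).fN b, (GraphHom.congr_fN (K.condition i) b).symm⟩

lemma invIndex_preimage_range_fE_subset
    (hcompl : ∀ i, IsPullback (cshape i) (tB i) (tCB i) inTG) (hK : IsColimit K)
    (hu_some : ∀ i, K.π (some i) ≫ u = tCB i) :
    u.fE ⁻¹' Set.range inTG.fE ⊆ Set.range (K.π none).fE := by
  rintro w ⟨x, hx⟩
  obtain ⟨r, y, rfl⟩ := (jointly_surjective_π_of_isColimit hK).2 w
  cases r with
  | none => exact ⟨y, rfl⟩
  | some i =>
    have hy : (tCB i).fE y = inTG.fE x := by rw [← hu_some i]; exact hx.symm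
    obtain ⟨b, rfl, -⟩ := (hcompl i).exists_fE_eq hy
    exact ⟨(occ i).fE b, (GraphHom.congr_fE (K.condition i) b).symm⟩

end InvariantClosure

theorem invariant_closure_retype_general (ι : Type) (TG TG' : DirGraph)
    (inTG : TG ⟶ TG') (hin : Mono inTG)
    (border cbody : ι → DirGraph) (cshape : ∀ i, border i ⟶ cbody i)
    (tB : ∀ i, border i ⟶ TG) (tCB : ∀ i, cbody i ⟶ TG')
    (hcompl : ∀ i, IsPullback (cshape i) (tB i) (tCB i) inTG)
    (G : DirGraph) (tG : G ⟶ TG)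
    (occ : ∀ i, border i ⟶ G)
    (K : Multicofork (invIndex ι G border cbody cshape occ)) (hK : IsColimit K)
    (u : K.pt ⟶ TG') (hu_none : K.π (none : Option ι) ≫ u = tG ≫ inTG)
    (hu_some : ∀ i, K.π (some i) ≫ u = tCB i) :
    IsPullback (K.π (none : Option ι)) tG u inTG := by
  have (i : ι) : Mono (cshape i) := (hcompl i).mono_fst_of_mono
  have := invIndex_mono_π_none hK
  exact DirGraph.isPullback_of_preimage_range_subset hu_none
    (invIndex_preimage_range_fN_subset hcompl hK hu_some)
    (invIndex_preimage_range_fE_subset hcompl hK hu_some)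

/-- The invariant closure is a section of retyping: pulling the invariant closure of a
`TG`-typed graph `G` back along the inclusion `in_TG : TG ⟶ TG'` recovers `G`
(expressed as the pullback property of the corresponding square). -/
theorem invariant_closure_retype (ι : Type) (TG TG' : DirGraph)
    (inTG : TG ⟶ TG') (hin : Mono inTG)
    (border cbody : ι → DirGraph) (cshape : ∀ i, border i ⟶ cbody i)
    (hcshape : ∀ i, Mono (cshape i))
    (tB : ∀ i, border i ⟶ TG) (tCB : ∀ i, cbody i ⟶ TG')
    (hcompl : ∀ i, IsPullback (cshape i) (tB i) (tCB i) inTG)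
    (G : DirGraph) (tG : G ⟶ TG)
    (occ : ∀ i, border i ⟶ G) (hocc_mono : ∀ i, Mono (occ i))
    (hocc : ∀ i, occ i ≫ tG = tB i)
    (K : Multicofork (invIndex ι G border cbody cshape occ)) (hK : IsColimit K)
    (u : K.pt ⟶ TG') (hu_none : K.π (none : Option ι) ≫ u = tG ≫ inTG)
    (hu_some : ∀ i, K.π (some i) ≫ u = tCB i) :
    IsPullback (K.π (none : Option ι)) tG u inTG :=
  invariant_closure_retype_general ι TG TG' inTG hin border cbody cshape tB tCB hcompl G tG occ K hK
    u hu_none hu_some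
end
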